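/- arXiv:2108.04865 — 3 statements merged into one kernel-verified Lean document; each statement's English description precedes it below -/
import Mathlib

section
/- The IPW estimator IPW₁ with known propensity scores is unbiased for the population average potential outcome: E[ (1/n) Σ_i y_i(A_i, A_{N_i}) 1{A_i = a} π(A_{N_i};α) / f(A_i, A_{N_i} | Z_i, Z_{N_i}) ] = ȳ(a,α), where ȳ(a,α) = (1/n) Σ_i Σ_{a_N} y_i(a, a_N) π(a_N; α). -/
open Finset

/-- Number of exposed neighbors in an exposure vector. -/
def cnt {d : ℕ} (a : Fin d → Bool) : ℕ :=
  (Finset.univ.filter (fun j => a j = true)).card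

/-- Bernoulli allocation weight of a neighbor exposure vector under strategy α. -/
noncomputable def piN {d : ℕ} (α : ℝ) (a : Fin d → Bool) : ℝ :=
  α ^ cnt a * (1 - α) ^ (d - cnt a)

/-- Bernoulli weight of a single binary exposure under strategy α. -/
noncomputable def piI (α : ℝ) (b : Bool) : ℝ :=
  if b then α else 1 - α

/-- Binomial allocation weight for s exposed neighbors out of d under strategy α. -/
noncomputable def piB (α : ℝ) (d s : ℕ) : ℝ :=
  (d.choose s : ℝ) * α ^ s * (1 - α) ^ (d - s)

/-!
Horvitz–Thompson: grouping the outcomes ω by the value of the exposure X = (A_i, A_{N_i}), the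
expectation of g(X) / f(X) is ∑_x f(x) · g(x) / f(x) = ∑_x g(x), since f is the law of X and is
positive. With g(b, v) = y_i(b, v) 1{b = a} π(v; α) this sum is ∑_v y_i(a, v) π(v; α), and
averaging over i commutes with the expectation.
-/

section Pushforward

variable {Ω β : Type*} [Fintype Ω] [Fintype β] [DecidableEq β] (P : Ω → ℝ) (X : Ω → β)

theorem sum_mul_comp_eq_sum_fiber_mul (g : β → ℝ) :
    ∑ ω, P ω * g (X ω) = ∑ x, (∑ ω ∈ univ.filter (fun ω => X ω = x), P ω) * g x := by
  rw [← sum_fiberwise univ X]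
  refine sum_congr rfl fun x _ => ?_
  rw [sum_mul]
  exact sum_congr rfl fun ω hω => by rw [(mem_filter.mp hω).2]

theorem sum_mul_div_comp_eq_sum {f g : β → ℝ}
    (hlaw : ∀ x, ∑ ω ∈ univ.filter (fun ω => X ω = x), P ω = f x) (hf : ∀ x, f x ≠ 0) :
    ∑ ω, P ω * (g (X ω) / f (X ω)) = ∑ x, g x := by
  rw [sum_mul_comp_eq_sum_fiber_mul P X (fun x => g x / f x)]
  exact sum_congr rfl fun x _ => by rw [hlaw, mul_div_cancel₀ _ (hf x)]

end Pushforward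

theorem ipw1_unbiased_general (n : ℕ) (d : Fin n → ℕ)
    (Ω : Type) [Fintype Ω] (P : Ω → ℝ)
    (A : Fin n → Ω → Bool) (AN : (i : Fin n) → Ω → (Fin (d i) → Bool))
    (f : (i : Fin n) → Bool → (Fin (d i) → Bool) → ℝ)
    (hfpos : ∀ i b v, 0 < f i b v)
    (hmarg : ∀ (i : Fin n) (b : Bool) (v : Fin (d i) → Bool),
      ∑ ω ∈ Finset.univ.filter (fun ω => A i ω = b ∧ AN i ω = v), P ω = f i b v)
    (y : (i : Fin n) → Bool → (Fin (d i) → Bool) → ℝ)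
    (a : Bool) (α : ℝ) :
    ∑ ω, P ω * ((1 / n : ℝ) * ∑ i, y i (A i ω) (AN i ω) * (if A i ω = a then 1 else 0)
        * piN α (AN i ω) / f i (A i ω) (AN i ω))
      = (1 / n : ℝ) * ∑ i, ∑ v : Fin (d i) → Bool, y i a v * piN α v := by
  have unit_unbiased : ∀ i, ∑ ω, P ω * (y i (A i ω) (AN i ω) * (if A i ω = a then 1 else 0)
      * piN α (AN i ω) / f i (A i ω) (AN i ω)) = ∑ v, y i a v * piN α v := by
    intro i
    have hlaw : ∀ x : Bool × (Fin (d i) → Bool),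
        ∑ ω ∈ univ.filter (fun ω => (A i ω, AN i ω) = x), P ω = f i x.1 x.2 := fun x => by
      simpa only [Prod.ext_iff] using hmarg i x.1 x.2
    rw [sum_mul_div_comp_eq_sum (g := fun x => y i x.1 x.2 * (if x.1 = a then 1 else 0)
        * piN α x.2) P _ hlaw fun x => (hfpos i x.1 x.2).ne', Fintype.sum_prod_type, sum_comm]
    simp
  rw [← sum_congr rfl fun i _ => unit_unbiased i, sum_comm, mul_sum]
  refine sum_congr rfl fun ω _ => ?_
  rw [← mul_sum]
  ring

/-- The IPW₁ estimator with known propensity scores is unbiased for the population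
average potential outcome ȳ(a,α). -/
theorem ipw1_unbiased (n : ℕ) (hn : 0 < n) (d : Fin n → ℕ)
    (Ω : Type) [Fintype Ω] (P : Ω → ℝ) (hP : ∀ ω, 0 ≤ P ω) (hP1 : ∑ ω, P ω = 1)
    (A : Fin n → Ω → Bool) (AN : (i : Fin n) → Ω → (Fin (d i) → Bool))
    (f : (i : Fin n) → Bool → (Fin (d i) → Bool) → ℝ)
    (hfpos : ∀ i b v, 0 < f i b v)
    (hmarg : ∀ (i : Fin n) (b : Bool) (v : Fin (d i) → Bool),
      ∑ ω ∈ Finset.univ.filter (fun ω => A i ω = b ∧ AN i ω = v), P ω = f i b v)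
    (y : (i : Fin n) → Bool → (Fin (d i) → Bool) → ℝ)
    (a : Bool) (α : ℝ) (h0 : 0 ≤ α) (h1 : α ≤ 1) :
    ∑ ω, P ω * ((1 / n : ℝ) * ∑ i, y i (A i ω) (AN i ω) * (if A i ω = a then 1 else 0)
        * piN α (AN i ω) / f i (A i ω) (AN i ω))
      = (1 / n : ℝ) * ∑ i, ∑ v : Fin (d i) → Bool, y i a v * piN α v :=
  ipw1_unbiased_general n d Ω P A AN f hfpos hmarg y a α
end

section
/- Under stratified interference, the IPW₂ estimator with known propensity scores is unbiased: E[ (1/n) Σ_i y_i(A_i, S_i) 1{A_i = a} π(S_i;α) / f₂(A_i, S_i | Z_i, Z_{N_i}) ] = ȳ(a,α), where S_i = Σ_{j ∈ N_i} A_j, π(s;α) = C(d_i,s) α^s (1-α)^{d_i - s}, and ȳ(a,α) = (1/n) Σ_i Σ_{s=0}^{d_i} y_i(a,s) π(s;α). -/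
open Finset

/-!
Unbiasedness holds unit by unit. Grouping the outcomes `ω` by the value `(A i ω, S i ω)`
turns the expectation of unit `i`'s term into a sum over exposures `(b, s)` of the
probability `f₂ i b s` of that exposure times the term evaluated there; the propensity
`f₂ i b s` in the denominator cancels it (positivity), and the indicator `1{b = a}`
leaves `∑ s, y i a s * piB α (d i) s`. Linearity in `i` finishes the argument.
-/

theorem sum_mul_div_marginal_eq_sum {Ω β 𝕜 : Type*} [Fintype Ω] [DecidableEq β] [Field 𝕜]
    (P : Ω → 𝕜) (X : Ω → β) (T : Finset β) (hX : ∀ ω, X ω ∈ T)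
    (p : β → 𝕜) (hp : ∀ t ∈ T, p t ≠ 0)
    (hmarg : ∀ t ∈ T, ∑ ω ∈ univ.filter (fun ω => X ω = t), P ω = p t) (g : β → 𝕜) :
    ∑ ω, P ω * (g (X ω) / p (X ω)) = ∑ t ∈ T, g t := by
  rw [← sum_fiberwise_of_maps_to (fun ω _ => hX ω)]
  refine sum_congr rfl fun t ht => ?_
  calc ∑ ω ∈ univ.filter (fun ω => X ω = t), P ω * (g (X ω) / p (X ω))
      = ∑ ω ∈ univ.filter (fun ω => X ω = t), P ω * (g t / p t) :=
        sum_congr rfl fun ω hω => by rw [(mem_filter.mp hω).2]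
    _ = p t * (g t / p t) := by rw [← sum_mul, hmarg t ht]
    _ = g t := mul_div_cancel₀ _ (hp t ht)

theorem sum_product_mul_indicator_eq {α β R : Type*} [Fintype α] [DecidableEq α] [Semiring R]
    (s : Finset β) (F : α → β → R) (a : α) :
    ∑ x ∈ (univ : Finset α) ×ˢ s, F x.1 x.2 * (if x.1 = a then 1 else 0)
      = ∑ b ∈ s, F a b := by
  rw [sum_product, sum_comm]
  simp

theorem sum_mul_ipw_term_eq {Ω : Type*} [Fintype Ω] (P : Ω → ℝ) (d : ℕ)
    (A : Ω → Bool) (S : Ω → ℕ) (hS : ∀ ω, S ω ≤ d) (f : Bool → ℕ → ℝ)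
    (hfpos : ∀ b s, s ≤ d → 0 < f b s)
    (hmarg : ∀ b s, s ≤ d → ∑ ω ∈ univ.filter (fun ω => A ω = b ∧ S ω = s), P ω = f b s)
    (y : Bool → ℕ → ℝ) (w : ℕ → ℝ) (a : Bool) :
    ∑ ω, P ω * (y (A ω) (S ω) * (if A ω = a then 1 else 0) * w (S ω) / f (A ω) (S ω))
      = ∑ s ∈ range (d + 1), y a s * w s := by
  have hX : ∀ ω, (A ω, S ω) ∈ (univ : Finset Bool) ×ˢ range (d + 1) := fun ω => by
    simpa [Nat.lt_succ_iff] using hS ω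
  have hle : ∀ x ∈ (univ : Finset Bool) ×ˢ range (d + 1), x.2 ≤ d := fun x hx => by
    simpa [Nat.lt_succ_iff] using hx
  rw [sum_mul_div_marginal_eq_sum P (fun ω => (A ω, S ω)) _ hX
      (fun x => f x.1 x.2) (fun x hx => (hfpos x.1 x.2 (hle x hx)).ne')
      (fun x hx => by simpa [Prod.ext_iff] using hmarg x.1 x.2 (hle x hx))
      (fun x => y x.1 x.2 * (if x.1 = a then 1 else 0) * w x.2)]
  simpa only [mul_right_comm] using
    sum_product_mul_indicator_eq (range (d + 1)) (fun b s => y b s * w s) a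

theorem ipw2_unbiased_general (n : ℕ) (d : Fin n → ℕ)
    (Ω : Type) [Fintype Ω] (P : Ω → ℝ)
    (A : Fin n → Ω → Bool) (S : Fin n → Ω → ℕ)
    (hS : ∀ i ω, S i ω ≤ d i)
    (f₂ : Fin n → Bool → ℕ → ℝ)
    (hfpos : ∀ i b s, s ≤ d i → 0 < f₂ i b s)
    (hmarg : ∀ (i : Fin n) (b : Bool) (s : ℕ), s ≤ d i →
      ∑ ω ∈ Finset.univ.filter (fun ω => A i ω = b ∧ S i ω = s), P ω = f₂ i b s)
    (y : Fin n → Bool → ℕ → ℝ)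
    (a : Bool) (α : ℝ) :
    ∑ ω, P ω * ((1 / n : ℝ) * ∑ i, y i (A i ω) (S i ω) * (if A i ω = a then 1 else 0)
        * piB α (d i) (S i ω) / f₂ i (A i ω) (S i ω))
      = (1 / n : ℝ) * ∑ i, ∑ s ∈ Finset.range (d i + 1), y i a s * piB α (d i) s := by
  have unit_term := fun i => sum_mul_ipw_term_eq P (d i) (A i) (S i) (hS i) (f₂ i) (hfpos i)
    (hmarg i) (y i) (piB α (d i)) a
  simp_rw [← unit_term, mul_sum]
  rw [sum_comm]
  exact sum_congr rfl fun ω _ => sum_congr rfl fun i _ => by ring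

/-- Under stratified interference, the IPW₂ estimator with known propensity scores is
unbiased for ȳ(a,α). -/
theorem ipw2_unbiased (n : ℕ) (hn : 0 < n) (d : Fin n → ℕ)
    (Ω : Type) [Fintype Ω] (P : Ω → ℝ) (hP : ∀ ω, 0 ≤ P ω) (hP1 : ∑ ω, P ω = 1)
    (A : Fin n → Ω → Bool) (S : Fin n → Ω → ℕ)
    (hS : ∀ i ω, S i ω ≤ d i)
    (f₂ : Fin n → Bool → ℕ → ℝ)
    (hfpos : ∀ i b s, s ≤ d i → 0 < f₂ i b s)
    (hmarg : ∀ (i : Fin n) (b : Bool) (s : ℕ), s ≤ d i →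
      ∑ ω ∈ Finset.univ.filter (fun ω => A i ω = b ∧ S i ω = s), P ω = f₂ i b s)
    (y : Fin n → Bool → ℕ → ℝ)
    (a : Bool) (α : ℝ) (h0 : 0 ≤ α) (h1 : α ≤ 1) :
    ∑ ω, P ω * ((1 / n : ℝ) * ∑ i, y i (A i ω) (S i ω) * (if A i ω = a then 1 else 0)
        * piB α (d i) (S i ω) / f₂ i (A i ω) (S i ω))
      = (1 / n : ℝ) * ∑ i, ∑ s ∈ Finset.range (d i + 1), y i a s * piB α (d i) s :=
  ipw2_unbiased_general n d Ω P A S hS f₂ hfpos hmarg y a α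
end

section
/- The IPW estimating equations are unbiased: with known propensity scores, for each component ν, E[ψ₀(Y_ν, A_ν, Z_ν; θ; α)] = 0 when θ_{0,α} = (1/k)·E[Σ_{i ∈ V(C_ν)} Σ_{a_N} y_{νi}(0, a_N) π(a_N; α)], where ψ₀(Y_ν,A_ν,Z_ν;θ;α) = (1/k) Σ_{i ∈ V(C_ν)} Y_{νi} 1{A_{νi}=0} π(A_{N_{νi}};α)/f(A_{νi}, A_{N_{νi}}|Z_{νi},Z_{N_{νi}}) − θ_{0,α}. -/
open Finset

/-- Population average potential outcome ȳ(a,α). -/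
noncomputable def ybarA (n : ℕ) (d : Fin n → ℕ)
    (y : (i : Fin n) → Bool → (Fin (d i) → Bool) → ℝ) (a : Bool) (α : ℝ) : ℝ :=
  (1 / n : ℝ) * ∑ i, ∑ v : Fin (d i) → Bool, y i a v * piN α v

/-- Marginal population average potential outcome ȳ(α). -/
noncomputable def ybarM (n : ℕ) (d : Fin n → ℕ)
    (y : (i : Fin n) → Bool → (Fin (d i) → Bool) → ℝ) (α : ℝ) : ℝ :=
  (1 / n : ℝ) * ∑ i, ∑ b : Bool, ∑ v : Fin (d i) → Bool, y i b v * piI α b * piN α v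

/-! Grouping the outcomes by the value `(b, v)` of `(A_i, A_{N_i})`, the inverse weight
`1 / f i b v` cancels the probability `f i b v` of that value, so the expected IPW term of
individual `i` is `∑ v, y i false v * piN α v`; linearity and `∑ P = 1` give the rest. -/

section FiniteExpectation

variable {Ω β γ ι : Type*} [Fintype Ω] [Fintype β] [Fintype γ] [Fintype ι]
  [DecidableEq β] [DecidableEq γ]

theorem sum_mul_comp_eq_sum_law (P : Ω → ℝ) (X : Ω → β) (g : β → ℝ) :
    ∑ ω, P ω * g (X ω) = ∑ b, (∑ ω ∈ univ.filter (fun ω => X ω = b), P ω) * g b := by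
  rw [← sum_fiberwise univ X]
  refine sum_congr rfl fun b _ => ?_
  rw [sum_mul]
  refine sum_congr rfl fun ω hω => ?_
  rw [(mem_filter.mp hω).2]

theorem sum_mul_div_joint_pmf (P : Ω → ℝ) (X : Ω → β) (Y : Ω → γ) (f : β → γ → ℝ)
    (hf : ∀ b c, f b c ≠ 0)
    (hmarg : ∀ b c, ∑ ω ∈ univ.filter (fun ω => X ω = b ∧ Y ω = c), P ω = f b c)
    (h : β → γ → ℝ) :
    ∑ ω, P ω * (h (X ω) (Y ω) / f (X ω) (Y ω)) = ∑ b, ∑ c, h b c := by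
  rw [sum_mul_comp_eq_sum_law P (fun ω => (X ω, Y ω)) (fun p => h p.1 p.2 / f p.1 p.2),
    Fintype.sum_prod_type]
  refine sum_congr rfl fun b _ => sum_congr rfl fun c _ => ?_
  simp only [Prod.ext_iff, hmarg, mul_div_cancel₀ _ (hf b c)]

theorem sum_mul_sub_of_sum_eq_one (P : Ω → ℝ) (hP1 : ∑ ω, P ω = 1) (c θ : ℝ)
    (T : ι → Ω → ℝ) :
    ∑ ω, P ω * (c * ∑ i, T i ω - θ) = c * ∑ i, ∑ ω, P ω * T i ω - θ := by
  simp only [mul_sub, sum_sub_distrib, ← sum_mul, hP1, one_mul, mul_sum]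
  rw [sum_comm]
  congr 1
  exact sum_congr rfl fun i _ => sum_congr rfl fun ω _ => mul_left_comm _ _ _

end FiniteExpectation

theorem sum_bool_sum_ite_false {γ : Type*} [Fintype γ] (g : Bool → γ → ℝ) (w : γ → ℝ) :
    ∑ b, ∑ c, g b c * (if b = false then 1 else 0) * w c = ∑ c, g false c * w c := by
  simp

theorem estimating_equation_unbiased_general (nν : ℕ) (d : Fin nν → ℕ) (k : ℝ)
    (Ω : Type) [Fintype Ω] (P : Ω → ℝ) (hP1 : ∑ ω, P ω = 1)
    (A : Fin nν → Ω → Bool) (AN : (i : Fin nν) → Ω → (Fin (d i) → Bool))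
    (f : (i : Fin nν) → Bool → (Fin (d i) → Bool) → ℝ)
    (hfpos : ∀ i b v, 0 < f i b v)
    (hmarg : ∀ (i : Fin nν) (b : Bool) (v : Fin (d i) → Bool),
      ∑ ω ∈ Finset.univ.filter (fun ω => A i ω = b ∧ AN i ω = v), P ω = f i b v)
    (y : (i : Fin nν) → Bool → (Fin (d i) → Bool) → ℝ)
    (α : ℝ)
    (θ : ℝ)
    (hθ : θ = (1 / k) * ∑ i, ∑ v : Fin (d i) → Bool, y i false v * piN α v) :
    ∑ ω, P ω * ((1 / k) * (∑ i, y i (A i ω) (AN i ω)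
        * (if A i ω = false then 1 else 0) * piN α (AN i ω)
        / f i (A i ω) (AN i ω)) - θ) = 0 := by
  have ipw : ∀ i, ∑ ω, P ω * (y i (A i ω) (AN i ω) * (if A i ω = false then 1 else 0)
      * piN α (AN i ω) / f i (A i ω) (AN i ω)) = ∑ v, y i false v * piN α v := fun i => by
    rw [sum_mul_div_joint_pmf P (A i) (AN i) (f i) (fun b v => (hfpos i b v).ne') (hmarg i)
      (fun b v => y i b v * (if b = false then 1 else 0) * piN α v), sum_bool_sum_ite_false]
  rw [sum_mul_sub_of_sum_eq_one P hP1, sum_congr rfl fun i _ => ipw i, ← hθ, sub_self]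

/-- The IPW estimating equation ψ₀ is unbiased: with known propensity scores, its
expectation is zero at the true parameter value θ₀α. -/
theorem estimating_equation_unbiased (nν : ℕ) (d : Fin nν → ℕ) (k : ℝ) (hk : 0 < k)
    (Ω : Type) [Fintype Ω] (P : Ω → ℝ) (hP : ∀ ω, 0 ≤ P ω) (hP1 : ∑ ω, P ω = 1)
    (A : Fin nν → Ω → Bool) (AN : (i : Fin nν) → Ω → (Fin (d i) → Bool))
    (f : (i : Fin nν) → Bool → (Fin (d i) → Bool) → ℝ)
    (hfpos : ∀ i b v, 0 < f i b v)
    (hmarg : ∀ (i : Fin nν) (b : Bool) (v : Fin (d i) → Bool),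
      ∑ ω ∈ Finset.univ.filter (fun ω => A i ω = b ∧ AN i ω = v), P ω = f i b v)
    (y : (i : Fin nν) → Bool → (Fin (d i) → Bool) → ℝ)
    (α : ℝ) (h0 : 0 ≤ α) (h1 : α ≤ 1)
    (θ : ℝ)
    (hθ : θ = (1 / k) * ∑ i, ∑ v : Fin (d i) → Bool, y i false v * piN α v) :
    ∑ ω, P ω * ((1 / k) * (∑ i, y i (A i ω) (AN i ω)
        * (if A i ω = false then 1 else 0) * piN α (AN i ω)
        / f i (A i ω) (AN i ω)) - θ) = 0 :=
  estimating_equation_unbiased_general nν d k Ω P hP1 A AN f hfpos hmarg y α θ hθ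
end
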